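/- arXiv:0710.2088 — 3 statements merged into one kernel-verified Lean document; each statement's English description precedes it below -/
import Mathlib

section
/- Let q be a prime power and n ≥ 1 with gcd(n, q) = 1. Let x : ZMod n → F_q with ∑_{i ∈ ZMod n} x(i) = 0 and F(y) = ∑_{i ∈ ZMod n} x(i) y^{val(i)}, and suppose gcd(F(y), ∑_{i=0}^{n−1} y^i) = 1 in F_q[y]. Let B be a circulant n×n matrix over F_q with associated polynomial B(y), and A = B·Δ. Then x is a most complicated point for A if and only if gcd(B(y), ∑_{i=0}^{n−1} y^i) ≠ 1 in F_q[y]. -/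
/-! Identify `F^n` with `R = F[X]/(X^n - 1)`: a vector is the first column of the circulant
matrix of its polynomial, and `circulant (Pi.single 1 1)` acts as multiplication by `X`. Then `A`
becomes multiplication by `a = B(X) (X^(n-1) - 1)`. As `gcd(n, q) = 1`, `X^n - 1` is separable,
so the finite ring `R` is reduced and `a^(N+1) = a` for some `N ≥ 1`. For the map `z ↦ a z` this
forces every preperiod to be `≤ 1`, with preperiod `0` exactly on `aR`, and the period of `z` to
be maximal as soon as `z ∣ a`. Both `x` and `a` vanish at `X = 1` and `x` is a unit modulo
`g = 1 + X + ⋯ + X^(n-1)`, so `x ∣ a` and `a` is not a unit; hence `x` is most complicated iff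
`a ∤ x`, which modulo `g` says that `B` is not coprime to `g`. -/
open Function Polynomial Finset

/-- The preperiod of the orbit of `x` under `T`: the least `s ≥ 0` such that
`T^[s+t] x = T^[s] x` for some `t ≥ 1`. -/
noncomputable def orbitPreperiod {S : Type*} (T : S → S) (x : S) : ℕ :=
  sInf {s | ∃ t, 1 ≤ t ∧ T^[s + t] x = T^[s] x}

/-- The (eventual) period of the orbit of `x` under `T`: the least `t ≥ 1` such that
`T^[s+t] x = T^[s] x` for some `s ≥ 0`. -/
noncomputable def orbitPeriod {S : Type*} (T : S → S) (x : S) : ℕ :=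
  sInf {t | 1 ≤ t ∧ ∃ s, T^[s + t] x = T^[s] x}

/-- `x` is most complicated for `T` if both its period and its preperiod are maximal. -/
def MostComplicated {S : Type*} [Fintype S] (T : S → S) (x : S) : Prop :=
  orbitPeriod T x = Finset.univ.sup (fun y => orbitPeriod T y) ∧
  orbitPreperiod T x = Finset.univ.sup (fun y => orbitPreperiod T y)

/-- `x` is almost most complicated for `T` if its period is maximal and its preperiod
equals the maximal preperiod minus one. -/
def AlmostMostComplicated {S : Type*} [Fintype S] (T : S → S) (x : S) : Prop :=
  orbitPeriod T x = Finset.univ.sup (fun y => orbitPeriod T y) ∧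
  orbitPreperiod T x = Finset.univ.sup (fun y => orbitPreperiod T y) - 1

/-- The cyclic shift operator `δ` on `F^n`: `(δ x) i = x (i+1)`. -/
def shiftOp (F : Type*) [Field F] (n : ℕ) : (ZMod n → F) →ₗ[F] (ZMod n → F) where
  toFun x := fun i => x (i + 1)
  map_add' _ _ := rfl
  map_smul' _ _ := rfl

section Semiconj

variable {S S' : Type*} {Φ : S → S'} {T : S → S} {T' : S' → S'}

theorem Function.Semiconj.iterate_apply_eq_iff (h : Semiconj Φ T T') (hΦ : Injective Φ)
    (z : S) (i j : ℕ) : T'^[i] (Φ z) = T'^[j] (Φ z) ↔ T^[i] z = T^[j] z := by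
  rw [← h.iterate_right, ← h.iterate_right, hΦ.eq_iff]

theorem orbitPeriod_semiconj (h : Semiconj Φ T T') (hΦ : Injective Φ) (z : S) :
    orbitPeriod T' (Φ z) = orbitPeriod T z := by
  simp only [orbitPeriod, h.iterate_apply_eq_iff hΦ]

theorem orbitPreperiod_semiconj (h : Semiconj Φ T T') (hΦ : Injective Φ) (z : S) :
    orbitPreperiod T' (Φ z) = orbitPreperiod T z := by
  simp only [orbitPreperiod, h.iterate_apply_eq_iff hΦ]

theorem mostComplicated_semiconj_iff [Fintype S] [Fintype S'] (h : Semiconj Φ T T')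
    (hΦ : Bijective Φ) (z : S) : MostComplicated T' (Φ z) ↔ MostComplicated T z := by
  classical
  have hsup (f : S' → ℕ) : univ.sup f = univ.sup (f ∘ Φ) := by
    rw [← sup_image, image_univ_of_surjective hΦ.2]
  simp only [MostComplicated, hsup, comp_def, orbitPeriod_semiconj h hΦ.1,
    orbitPreperiod_semiconj h hΦ.1]

end Semiconj

theorem orbitPeriod_apply {S : Type*} (T : S → S) (z : S) :
    orbitPeriod T (T z) = orbitPeriod T z := by
  simp only [orbitPeriod, ← iterate_succ_apply]
  congr 1
  ext t
  refine and_congr_right fun _ => ⟨fun ⟨s, hs⟩ => ⟨s + 1, by rwa [Nat.add_right_comm]⟩,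
    fun ⟨s, hs⟩ => ⟨s, ?_⟩⟩
  rw [iterate_succ_apply', iterate_succ_apply', hs]

section MulLeft

variable {M : Type*} [CommMonoid M] {a : M} {N : ℕ}

theorem mul_iterate_one_add_eq (ha : a ^ (N + 1) = a) (z : M) :
    (a * ·)^[1 + N] z = (a * ·)^[1] z := by
  rw [mul_left_iterate_apply, mul_left_iterate_apply, Nat.add_comm, ha, pow_one]

theorem orbitPeriod_mul_le_of_dvd (hN : 0 < N) (ha : a ^ (N + 1) = a) {z w : M} (hzw : z ∣ w) :
    orbitPeriod (a * ·) w ≤ orbitPeriod (a * ·) z := by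
  obtain ⟨c, rfl⟩ := hzw
  refine csInf_le_csInf' ⟨N, hN, 1, mul_iterate_one_add_eq ha z⟩ ?_
  rintro t ⟨ht, s, hs⟩
  refine ⟨ht, s, ?_⟩
  simp only [mul_left_iterate_apply] at hs ⊢
  rw [← mul_assoc, hs, mul_assoc]

theorem orbitPreperiod_mul_le_one (hN : 0 < N) (ha : a ^ (N + 1) = a) (z : M) :
    orbitPreperiod (a * ·) z ≤ 1 :=
  Nat.sInf_le ⟨N, hN, mul_iterate_one_add_eq ha z⟩

theorem orbitPreperiod_mul_eq_zero_iff (hN : 0 < N) (ha : a ^ (N + 1) = a) (z : M) :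
    orbitPreperiod (a * ·) z = 0 ↔ a ∣ z := by
  rw [orbitPreperiod, Nat.sInf_eq_zero]
  constructor
  · rintro (⟨t, ht, hz⟩ | hempty)
    · simp only [mul_left_iterate_apply, zero_add, pow_zero, one_mul] at hz
      rw [← hz, ← pow_sub_one_mul (Nat.one_le_iff_ne_zero.1 ht), mul_comm _ a, mul_assoc]
      exact dvd_mul_right _ _
    · exact (Set.eq_empty_iff_forall_notMem.1 hempty 1
        ⟨N, hN, mul_iterate_one_add_eq ha z⟩).elim
  · rintro ⟨w, rfl⟩
    refine Or.inl ⟨N, hN, ?_⟩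
    simp only [mul_left_iterate_apply, zero_add, pow_zero, one_mul]
    rw [← mul_assoc, ← pow_succ, ha]

theorem orbitPreperiod_mul_eq_one_iff (hN : 0 < N) (ha : a ^ (N + 1) = a) (z : M) :
    orbitPreperiod (a * ·) z = 1 ↔ ¬a ∣ z := by
  rw [← orbitPreperiod_mul_eq_zero_iff hN ha]
  have := orbitPreperiod_mul_le_one hN ha z
  omega

theorem mostComplicated_mul_iff [Fintype M] (hN : 0 < N) (ha : a ^ (N + 1) = a)
    (hunit : ¬IsUnit a) {x : M} (hxa : x ∣ a) : MostComplicated (a * ·) x ↔ ¬a ∣ x := by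
  have hperiod : orbitPeriod (a * ·) x = orbitPeriod (a * ·) 1 :=
    le_antisymm (orbitPeriod_mul_le_of_dvd hN ha (one_dvd x)) <|
      calc orbitPeriod (a * ·) 1 = orbitPeriod (a * ·) (a * 1) := (orbitPeriod_apply _ 1).symm
        _ ≤ orbitPeriod (a * ·) x := orbitPeriod_mul_le_of_dvd hN ha (by rwa [mul_one])
  have hpreperiod : orbitPreperiod (a * ·) (1 : M) = 1 :=
    (orbitPreperiod_mul_eq_one_iff hN ha 1).2 (mt isUnit_iff_dvd_one.2 hunit)
  have hsup_period : univ.sup (fun y => orbitPeriod (a * ·) y) = orbitPeriod (a * ·) 1 :=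
    le_antisymm (Finset.sup_le fun y _ => orbitPeriod_mul_le_of_dvd hN ha (one_dvd y))
      (le_sup (mem_univ _))
  have hsup_preperiod : univ.sup (fun y => orbitPreperiod (a * ·) y) = 1 :=
    le_antisymm (Finset.sup_le fun y _ => orbitPreperiod_mul_le_one hN ha y)
      (hpreperiod ▸ le_sup (mem_univ _))
  rw [MostComplicated, hsup_period, hsup_preperiod, hperiod, orbitPreperiod_mul_eq_one_iff hN ha]
  exact and_iff_right rfl

end MulLeft

theorem exists_pow_succ_eq_self {R : Type*} [CommRing R] [IsReduced R] [Finite R] (a : R) :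
    ∃ N, 0 < N ∧ a ^ (N + 1) = a := by
  obtain ⟨i, j, hij, hpow⟩ := Set.finite_univ.exists_lt_map_eq_of_forall_mem
    (f := fun k : ℕ => a ^ k) fun _ => Set.mem_univ _
  have hcycle : a ^ i * (a ^ (j - i) - 1) = 0 := by
    rw [mul_sub, mul_one, ← pow_add, Nat.add_sub_cancel' hij.le, ← hpow, sub_self]
  have hnil : IsNilpotent (a * (a ^ (j - i) - 1)) :=
    ⟨i + 1, by
      rw [mul_pow, pow_succ, pow_succ']
      linear_combination (a * (a ^ (j - i) - 1) ^ i) * hcycle⟩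
  refine ⟨j - i, Nat.sub_pos_of_lt hij, ?_⟩
  linear_combination hnil.eq_zero

theorem natCast_ne_zero_of_coprime_card {F : Type*} [Field F] [Fintype F] {n : ℕ}
    (h : n.Coprime (Fintype.card F)) : (n : F) ≠ 0 := by
  rw [Ne, CharP.cast_eq_zero_iff F (ringChar F)]
  intro hn
  exact CharP.ringChar_ne_one <| Nat.eq_one_of_dvd_one <| h ▸
    Nat.dvd_gcd hn ((ringChar.spec F _).1 (FiniteField.cast_card_eq_zero F))

theorem Polynomial.monic_X_pow_sub_one {R : Type*} [Ring R] {n : ℕ} (hn : n ≠ 0) :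
    (X ^ n - 1 : R[X]).Monic := by
  simpa using monic_X_pow_sub_C (1 : R) hn

namespace AdjoinRoot

theorem isReduced_of_separable {F : Type*} [Field F] {m : F[X]} (hm : m.Separable) :
    IsReduced (AdjoinRoot m) :=
  (Ideal.isRadical_iff_quotient_reduced _).1
    (isRadical_iff_span_singleton.1 hm.squarefree.isRadical)

variable {K : Type*} [CommRing K] {m : K[X]}

theorem finite_of_monic [Finite K] (hm : m.Monic) : Finite (AdjoinRoot m) :=
  .of_equiv _ (powerBasis' hm).basis.equivFun.toEquiv.symm

instance [Finite K] {n : ℕ} [NeZero n] : Finite (AdjoinRoot (X ^ n - 1 : K[X])) :=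
  finite_of_monic (monic_X_pow_sub_one (NeZero.ne n))

theorem natCard_of_monic (hm : m.Monic) : Nat.card (AdjoinRoot m) = Nat.card K ^ m.natDegree := by
  rw [Nat.card_congr (powerBasis' hm).basis.equivFun.toEquiv, Nat.card_fun,
    Nat.card_eq_fintype_card (α := Fin _), Fintype.card_fin, powerBasis'_dim]

theorem not_isUnit_mk_of_isRoot [Nontrivial K] {p : K[X]} {r : K} (hm : m.IsRoot r)
    (hp : p.IsRoot r) : ¬IsUnit (mk m p) := fun hu => by
  have := hu.map (lift (RingHom.id K) r hm)
  rw [show lift (RingHom.id K) r hm (mk m p) = p.eval r from lift_mk _ p, hp.eq_zero] at this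
  exact not_isUnit_zero this

theorem mk_mul_dvd_mk_of_isCoprime {f g h : K[X]} (hm : m ∣ g * h) (hfg : IsCoprime f g) :
    mk m (f * h) ∣ mk m h := by
  obtain ⟨p, s, hps⟩ := hfg
  refine ⟨mk m p, ?_⟩
  rw [← map_mul, mk_eq_mk]
  exact hm.trans ⟨s, by linear_combination (-h) * hps⟩

theorem isCoprime_of_mk_dvd_mk {f g b : K[X]} (hg : g ∣ m) (hfg : IsCoprime f g)
    (hbf : mk m b ∣ mk m f) : IsCoprime b g := by
  obtain ⟨z, hz⟩ := hbf
  obtain ⟨c, rfl⟩ := mk_surjective z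
  rw [← map_mul, mk_eq_mk] at hz
  obtain ⟨k, hk⟩ := hg.trans hz
  rw [sub_eq_iff_eq_add] at hk
  rw [hk, add_comm, IsCoprime.add_mul_left_left_iff] at hfg
  exact hfg.of_mul_left_left

variable {n : ℕ}

theorem mk_X_pow_pred_sub_one_dvd (hn : n ≠ 0) :
    mk (X ^ n - 1 : K[X]) (X ^ (n - 1) - 1) ∣ mk (X ^ n - 1) (X - 1) := by
  refine ⟨mk _ (-X), ?_⟩
  rw [← map_mul, mk_eq_mk]
  exact ⟨1, by linear_combination pow_sub_one_mul hn (X : K[X])⟩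

theorem mk_dvd_mk_mul_X_pow_pred_sub_one {f : K[X]} (hf : IsCoprime f (∑ i ∈ range n, X ^ i))
    (b : K[X]) : mk (X ^ n - 1) f ∣ mk (X ^ n - 1) (b * (X ^ (n - 1) - 1)) :=
  calc mk _ f ∣ mk _ (f * (X - 1)) := map_dvd _ (dvd_mul_right f _)
    _ ∣ mk _ (X - 1) := mk_mul_dvd_mk_of_isCoprime (geom_sum_mul X n).symm.dvd hf
    _ ∣ mk _ (b * (X ^ (n - 1) - 1)) := map_dvd _ ((sub_one_dvd_pow_sub_one X _).mul_left b)

theorem mk_mul_X_pow_pred_sub_one_dvd_mk_iff (hn : n ≠ 0) {f b : K[X]}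
    (hf : IsCoprime f (∑ i ∈ range n, X ^ i)) (hfX : X - 1 ∣ f) :
    mk (X ^ n - 1) (b * (X ^ (n - 1) - 1)) ∣ mk (X ^ n - 1) f ↔
      IsCoprime b (∑ i ∈ range n, X ^ i) := by
  refine ⟨fun h => isCoprime_of_mk_dvd_mk ⟨X - 1, (geom_sum_mul X n).symm⟩ hf
    ((map_dvd (mk _) (dvd_mul_right b _)).trans h), fun h => ?_⟩
  calc mk _ (b * (X ^ (n - 1) - 1)) = mk _ b * mk _ (X ^ (n - 1) - 1) := map_mul _ _ _
    _ ∣ mk _ b * mk _ (X - 1) := mul_dvd_mul_left _ (mk_X_pow_pred_sub_one_dvd hn)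
    _ = mk _ (b * (X - 1)) := (map_mul _ _ _).symm
    _ ∣ mk _ (X - 1) := mk_mul_dvd_mk_of_isCoprime (geom_sum_mul X n).symm.dvd h
    _ ∣ mk _ f := map_dvd _ hfX

end AdjoinRoot

namespace Matrix

theorem circulant_sum {K ι α : Type*} [AddCommMonoid K] [Sub ι] (s : Finset α)
    (v : α → ι → K) :
    circulant (∑ a ∈ s, v a) = ∑ a ∈ s, circulant (v a) := by
  ext
  simp [circulant_apply, sum_apply]

variable {K ι : Type*} [CommRing K] [AddCommGroup ι] [Fintype ι] [DecidableEq ι]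

theorem circulant_single_mul_circulant_single (i j : ι) (r s : K) :
    circulant (Pi.single i r) * circulant (Pi.single j s) =
      circulant (Pi.single (i + j) (r * s)) := by
  rw [circulant_mul, mulVec_single]
  congr 1
  funext k
  simp [Pi.single_apply, sub_eq_iff_eq_add]

theorem circulant_single_one_pow (i : ι) (k : ℕ) :
    circulant (Pi.single i (1 : K)) ^ k = circulant (Pi.single (k • i) 1) := by
  induction k with
  | zero => simp
  | succ k ih => rw [pow_succ, ih, circulant_single_mul_circulant_single, succ_nsmul, mul_one]

theorem circulant_ite_neg_one_eq_pow (n : ℕ) [NeZero n] :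
    circulant (fun i : ZMod n => if i = -1 then (1 : K) else 0) =
      circulant (Pi.single 1 1) ^ (n - 1) := by
  rw [circulant_single_one_pow, nsmul_eq_mul, mul_one, Nat.cast_pred (NeZero.pos n),
    ZMod.natCast_self, zero_sub]
  congr 1
  ext i
  rw [Pi.single_apply]

end Matrix

open Matrix

section CirculantHom

variable (K : Type*) [CommRing K] (n : ℕ) [NeZero n]

theorem aeval_circulant_single_one (v : ZMod n → K) :
    aeval (circulant (Pi.single 1 1)) (∑ i : ZMod n, C (v i) * X ^ i.val) = circulant v := by
  simp only [map_sum, map_mul, aeval_C, aeval_X_pow, circulant_single_one_pow, nsmul_eq_mul,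
    mul_one, ZMod.natCast_zmod_val, Algebra.algebraMap_eq_smul_one, smul_mul_assoc, one_mul,
    ← circulant_smul, ← Pi.single_smul', smul_eq_mul, ← circulant_sum, univ_sum_single]

theorem aeval_circulant_single_one_X_pow_sub_one :
    aeval (circulant (Pi.single (1 : ZMod n) (1 : K))) (X ^ n - 1 : K[X]) = 0 := by
  rw [map_sub, map_pow, aeval_X, circulant_single_one_pow, nsmul_eq_mul, ZMod.natCast_self,
    zero_mul, circulant_single_one, map_one, sub_self]

noncomputable def circulantHom : AdjoinRoot (X ^ n - 1 : K[X]) →+* Matrix (ZMod n) (ZMod n) K :=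
  Ideal.Quotient.lift _ (aeval (circulant (Pi.single 1 1))).toRingHom fun p hp => by
    obtain ⟨c, rfl⟩ := Ideal.mem_span_singleton.1 hp
    rw [AlgHom.toRingHom_eq_coe, RingHom.coe_coe, map_mul,
      aeval_circulant_single_one_X_pow_sub_one, zero_mul]

theorem circulantHom_mk (p : K[X]) :
    circulantHom K n (AdjoinRoot.mk _ p) = aeval (circulant (Pi.single 1 1)) p :=
  rfl

theorem circulantHom_mk_sum_mulVec_single (v : ZMod n → K) :
    circulantHom K n (AdjoinRoot.mk _ (∑ i : ZMod n, C (v i) * X ^ i.val)) *ᵥ Pi.single 0 1 =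
      v := by
  rw [circulantHom_mk, aeval_circulant_single_one, mulVec_single_one]
  exact funext (circulant_col_zero_eq v)

theorem bijective_circulantHom_mulVec_single [Finite K] [Nontrivial K] :
    Bijective fun r => circulantHom K n r *ᵥ Pi.single 0 1 := by
  refine Surjective.bijective_of_nat_card_le
    (fun v => ⟨_, circulantHom_mk_sum_mulVec_single K n v⟩) ?_
  rw [AdjoinRoot.natCard_of_monic (monic_X_pow_sub_one (NeZero.ne n)), Nat.card_fun,
    Nat.card_zmod, ← C_1, natDegree_X_pow_sub_C]

end CirculantHom

theorem stmt8_general (q n : ℕ) [NeZero n] (hnq : Nat.gcd n q = 1)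
    (F : Type) [Field F] [Fintype F] (hF : Fintype.card F = q)
    (x : ZMod n → F)
    (hsum : ∑ i : ZMod n, x i = 0)
    (hx : IsCoprime (∑ i : ZMod n, C (x i) * X ^ i.val)
        (∑ i ∈ Finset.range n, (X : Polynomial F) ^ i))
    (b : ZMod n → F)
    (A : Matrix (ZMod n) (ZMod n) F)
    (hA : A = Matrix.circulant b *
        (Matrix.circulant (fun i : ZMod n => if i = -1 then (1 : F) else 0) - 1)) :
    MostComplicated (fun y : ZMod n → F => A.mulVec y) x ↔
      ¬ IsCoprime (∑ i : ZMod n, C (b i) * X ^ i.val)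
          (∑ i ∈ Finset.range n, (X : Polynomial F) ^ i) := by
  set f : F[X] := ∑ i : ZMod n, C (x i) * X ^ i.val
  set a := AdjoinRoot.mk (X ^ n - 1) ((∑ i : ZMod n, C (b i) * X ^ i.val) * (X ^ (n - 1) - 1))
  let := Fintype.ofFinite (AdjoinRoot (X ^ n - 1 : F[X]))
  have hA' : A = circulantHom F n a := by
    rw [hA, circulantHom_mk, map_mul, aeval_circulant_single_one, map_sub, map_pow, aeval_X,
      map_one, circulant_ite_neg_one_eq_pow]
  have hconj : MostComplicated (A *ᵥ ·) x ↔ MostComplicated (a * ·) (AdjoinRoot.mk _ f) := by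
    rw [← mostComplicated_semiconj_iff (T' := (A *ᵥ ·))
      (fun r => by rw [map_mul, ← mulVec_mulVec, hA'])
      (bijective_circulantHom_mulVec_single F n), circulantHom_mk_sum_mulVec_single]
  have : IsReduced (AdjoinRoot (X ^ n - 1 : F[X])) := AdjoinRoot.isReduced_of_separable <| by
    simpa using separable_X_pow_sub_C (1 : F) (natCast_ne_zero_of_coprime_card (hF ▸ hnq))
      one_ne_zero
  obtain ⟨N, hN, haN⟩ := exists_pow_succ_eq_self a
  have hfX : X - 1 ∣ f := dvd_iff_isRoot.2 (by simpa [f, eval_finsetSum] using hsum)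
  rw [hconj, mostComplicated_mul_iff hN haN
    (AdjoinRoot.not_isUnit_mk_of_isRoot (r := 1) (by simp) (by simp))
    (AdjoinRoot.mk_dvd_mk_mul_X_pow_pred_sub_one hx _),
    AdjoinRoot.mk_mul_X_pow_pred_sub_one_dvd_mk_iff (NeZero.ne n) hx hfX]

/-- Lemma 3, second part: if `∑ x(i) = 0` and `gcd(F(y), 1+y+⋯+y^{n-1}) = 1`,
then `x` is a most complicated point for `A = B·Δ` (with `B` the circulant of `b`) iff
`gcd(B(y), 1+y+⋯+y^{n-1}) ≠ 1`. -/
theorem stmt8 (q n : ℕ) (hq : IsPrimePow q) [NeZero n] (hnq : Nat.gcd n q = 1)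
    (F : Type) [Field F] [Fintype F] (hF : Fintype.card F = q)
    (x : ZMod n → F)
    (hsum : ∑ i : ZMod n, x i = 0)
    (hx : IsCoprime (∑ i : ZMod n, C (x i) * X ^ i.val)
        (∑ i ∈ Finset.range n, (X : Polynomial F) ^ i))
    (b : ZMod n → F)
    (A : Matrix (ZMod n) (ZMod n) F)
    (hA : A = Matrix.circulant b *
        (Matrix.circulant (fun i : ZMod n => if i = -1 then (1 : F) else 0) - 1)) :
    MostComplicated (fun y : ZMod n → F => A.mulVec y) x ↔
      ¬ IsCoprime (∑ i : ZMod n, C (b i) * X ^ i.val)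
          (∑ i ∈ Finset.range n, (X : Polynomial F) ^ i) :=
  stmt8_general q n hnq F hF x hsum hx b A hA
end

section
/- Let q = p^d be a prime power, let n be an odd prime with n ≠ p, and let f : ZMod n → F_q be a nontrivial multiplicative function, viewed as a vector in F_q^n. Then f is a most complicated or almost most complicated point for every linear operator A on F_q^n representable in the form A = B·Δ with B a translation-invariant linear operator. -/
/-!
Over an extension `E` of `F` carrying a primitive additive character `ψ` of `ZMod n` (it exists
because `n ≠ char F`), the Fourier transform `x ↦ (∑ a, x a ψ (j a))_j` is injective and
diagonalises every translation-invariant operator: `A = B Δ` multiplies the `j`-th coefficient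
by `μ j = (j-th coefficient of B e₀) · (ψ (-j) - 1)`, and `μ 0 = 0`. Since the space is finite,
the nonzero `μ j` are roots of unity; hence every orbit is periodic after one step, the preperiod
`1` is attained by `e₀`, and a vector whose coefficients are nonzero wherever `μ j ≠ 0` has
maximal period. For `j ≠ 0` the `j`-th coefficient of `f` is a Gauss sum of the nontrivial
multiplicative character `f`, hence nonzero, so `f` has maximal period and preperiod `0` or `1`.
-/

open Function Polynomial Finset

/-- A multiplicative function `ZMod n → F`: vanishes at `0`, is not identically zero on
nonzero elements, and is multiplicative on nonzero elements. -/
def IsMultFun {n : ℕ} {F : Type*} [Field F] (f : ZMod n → F) : Prop :=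
  f 0 = 0 ∧ (∃ a : ZMod n, a ≠ 0 ∧ f a ≠ 0) ∧
    ∀ a b : ZMod n, a ≠ 0 → b ≠ 0 → f (a * b) = f a * f b

lemma exists_iterate_add_eq_iterate_of_finite {S : Type*} [Finite S] (T : S → S) (x : S) :
    ∃ s t, 1 ≤ t ∧ T^[s + t] x = T^[s] x := by
  obtain ⟨a, b, hab, h⟩ := Finite.exists_ne_map_eq_of_infinite (fun m : ℕ => T^[m] x)
  rcases lt_or_gt_of_ne hab with hlt | hlt
  · exact ⟨a, b - a, by omega, by rw [Nat.add_sub_cancel' hlt.le]; exact h.symm⟩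
  · exact ⟨b, a - b, by omega, by rw [Nat.add_sub_cancel' hlt.le]; exact h⟩

section Diagonal

variable {S ι E : Type*} [Field E] {T : S → S} {Φ : S → ι → E} {μ : ι → E}

lemma apply_iterate_of_diagonal (hT : ∀ x j, Φ (T x) j = μ j * Φ x j) (m : ℕ) (x : S) (j : ι) :
    Φ (T^[m] x) j = μ j ^ m * Φ x j := by
  induction m with
  | zero => simp
  | succ m ih => rw [iterate_succ_apply', hT, ih]; ring

lemma iterate_eq_iterate_iff_of_diagonal (hΦ : Injective Φ)
    (hT : ∀ x j, Φ (T x) j = μ j * Φ x j) {a b : ℕ} {x : S} :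
    T^[a] x = T^[b] x ↔ ∀ j, μ j ^ a * Φ x j = μ j ^ b * Φ x j := by
  simp_rw [← apply_iterate_of_diagonal hT]
  exact ⟨fun h j => by rw [h], fun h => hΦ (funext h)⟩

lemma pow_eq_one_of_iterate_add_eq (hT : ∀ x j, Φ (T x) j = μ j * Φ x j) {s t : ℕ} {x : S}
    (h : T^[s + t] x = T^[s] x) {j : ι} (hx : Φ x j ≠ 0) (hμ : μ j ≠ 0) : μ j ^ t = 1 := by
  have hj := congr_fun (congrArg Φ h) j
  rw [apply_iterate_of_diagonal hT, apply_iterate_of_diagonal hT, pow_add, mul_assoc] at hj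
  exact mul_right_cancel₀ hx ((mul_left_cancel₀ (pow_ne_zero s hμ) hj).trans (one_mul _).symm)

lemma iterate_one_add_eq_of_pow_eq_one (hΦ : Injective Φ) (hT : ∀ x j, Φ (T x) j = μ j * Φ x j)
    {t : ℕ} {x : S} (h : ∀ j, Φ x j ≠ 0 → μ j ≠ 0 → μ j ^ t = 1) :
    T^[1 + t] x = T^[1] x := by
  refine (iterate_eq_iterate_iff_of_diagonal hΦ hT).2 fun j => ?_
  by_cases hx : Φ x j = 0
  · simp [hx]
  by_cases hμ : μ j = 0
  · simp [hμ]
  · rw [pow_add, h j hx hμ, mul_one]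

/-- Finiteness makes every `μ j ≠ 0` on the support of `Φ x` a root of unity. -/
lemma exists_iterate_one_add_eq_of_diagonal [Finite S] (hΦ : Injective Φ)
    (hT : ∀ x j, Φ (T x) j = μ j * Φ x j) (x : S) : ∃ t, 1 ≤ t ∧ T^[1 + t] x = T^[1] x := by
  obtain ⟨s, t, ht, h⟩ := exists_iterate_add_eq_iterate_of_finite T x
  exact ⟨t, ht, iterate_one_add_eq_of_pow_eq_one hΦ hT fun j =>
    pow_eq_one_of_iterate_add_eq hT h⟩

lemma orbitPreperiod_le_one_of_diagonal [Finite S] (hΦ : Injective Φ)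
    (hT : ∀ x j, Φ (T x) j = μ j * Φ x j) (x : S) : orbitPreperiod T x ≤ 1 :=
  Nat.sInf_le (exists_iterate_one_add_eq_of_diagonal hΦ hT x)

lemma orbitPreperiod_eq_one_of_diagonal [Finite S] (hΦ : Injective Φ)
    (hT : ∀ x j, Φ (T x) j = μ j * Φ x j) {x : S} {j : ι} (hμ : μ j = 0) (hx : Φ x j ≠ 0) :
    orbitPreperiod T x = 1 := by
  refine le_antisymm (orbitPreperiod_le_one_of_diagonal hΦ hT x) (Nat.one_le_iff_ne_zero.2 ?_)
  intro h0
  have hmem : orbitPreperiod T x ∈ {s | ∃ t, 1 ≤ t ∧ T^[s + t] x = T^[s] x} :=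
    Nat.sInf_mem ⟨1, exists_iterate_one_add_eq_of_diagonal hΦ hT x⟩
  obtain ⟨t, ht, hper⟩ := h0 ▸ hmem
  have hj := (iterate_eq_iterate_iff_of_diagonal hΦ hT).1 hper j
  rw [hμ, zero_pow (by omega), pow_zero, zero_mul, one_mul] at hj
  exact hx hj.symm

lemma orbitPeriod_le_of_diagonal [Finite S] (hΦ : Injective Φ)
    (hT : ∀ x j, Φ (T x) j = μ j * Φ x j) {y : S} (hy : ∀ j, μ j ≠ 0 → Φ y j ≠ 0) (x : S) :
    orbitPeriod T x ≤ orbitPeriod T y := by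
  obtain ⟨s, t, ht, h⟩ := exists_iterate_add_eq_iterate_of_finite T y
  have hmem : orbitPeriod T y ∈ {t | 1 ≤ t ∧ ∃ s, T^[s + t] y = T^[s] y} :=
    Nat.sInf_mem ⟨t, ht, s, h⟩
  obtain ⟨hpos, s', hy'⟩ := hmem
  exact Nat.sInf_le ⟨hpos, 1, iterate_one_add_eq_of_pow_eq_one hΦ hT fun j _ hμ =>
    pow_eq_one_of_iterate_add_eq hT hy' (hy j hμ) hμ⟩

lemma mostComplicated_or_almostMostComplicated_of_diagonal [Fintype S] (hΦ : Injective Φ)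
    (hT : ∀ x j, Φ (T x) j = μ j * Φ x j) {x : S} (hx : ∀ j, μ j ≠ 0 → Φ x j ≠ 0)
    {e : S} {j₀ : ι} (hμ : μ j₀ = 0) (he : Φ e j₀ ≠ 0) :
    MostComplicated T x ∨ AlmostMostComplicated T x := by
  have hper : orbitPeriod T x = univ.sup (orbitPeriod T) :=
    le_antisymm (le_sup (mem_univ x))
      (Finset.sup_le fun y _ => orbitPeriod_le_of_diagonal hΦ hT hx y)
  have hpre : univ.sup (orbitPreperiod T) = 1 :=
    le_antisymm (Finset.sup_le fun y _ => orbitPreperiod_le_one_of_diagonal hΦ hT y)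
      (orbitPreperiod_eq_one_of_diagonal hΦ hT hμ he ▸ le_sup (mem_univ e))
  rcases Nat.le_one_iff_eq_zero_or_eq_one.1 (orbitPreperiod_le_one_of_diagonal hΦ hT x) with h | h
  · exact .inr ⟨hper, by rw [h, hpre]⟩
  · exact .inl ⟨hper, by rw [h, hpre]⟩

end Diagonal

lemma shiftOp_pow_apply {n : ℕ} {F : Type*} [Field F] (k : ℕ) (x : ZMod n → F) (i : ZMod n) :
    (shiftOp F n ^ k) x i = x (i + k) := by
  induction k generalizing i with
  | zero => simp
  | succ k ih =>
    rw [pow_succ', Module.End.mul_apply]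
    show (shiftOp F n ^ k) x (i + 1) = _
    rw [ih]
    push_cast
    ring_nf

section Fourier

variable {n : ℕ} [NeZero n] {F E : Type*} [Field F] [Field E] [Algebra F E]
  (ψ : AddChar (ZMod n) E)

def charDFT : (ZMod n → F) →ₗ[F] (ZMod n → E) where
  toFun x j := ∑ a, algebraMap F E (x a) * ψ (j * a)
  map_add' x y := by ext j; simp [add_mul, sum_add_distrib]
  map_smul' c x := by ext j; simp [mul_sum, Algebra.smul_def, mul_assoc]

lemma charDFT_apply (x : ZMod n → F) (j : ZMod n) :
    charDFT ψ x j = ∑ a, algebraMap F E (x a) * ψ (j * a) := rfl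

lemma charDFT_shiftOp_pow (k : ℕ) (x : ZMod n → F) (j : ZMod n) :
    charDFT ψ ((shiftOp F n ^ k) x) j = ψ (-(j * k)) * charDFT ψ x j := by
  simp_rw [charDFT_apply, shiftOp_pow_apply, mul_sum]
  refine Fintype.sum_equiv (Equiv.addRight (k : ZMod n)) _ _ fun a => ?_
  rw [Equiv.coe_addRight, mul_left_comm, ← AddChar.map_add_eq_mul]
  ring_nf

lemma charDFT_shiftOp (x : ZMod n → F) (j : ZMod n) :
    charDFT ψ (shiftOp F n x) j = ψ (-j) * charDFT ψ x j := by
  simpa using charDFT_shiftOp_pow ψ 1 x j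

lemma charDFT_single_zero (j : ZMod n) : charDFT ψ (Pi.single 0 (1 : F)) j = 1 := by
  simp [charDFT_apply, Pi.single_apply]

lemma single_eq_shiftOp_pow_single (m : ZMod n) :
    Pi.single m (1 : F) = (shiftOp F n ^ (-m).val) (Pi.single 0 1) := by
  ext i
  simp only [shiftOp_pow_apply, ZMod.natCast_zmod_val, Pi.single_apply, ← sub_eq_add_neg,
    sub_eq_zero]

/-- Every unit vector is a shift of `Pi.single 0 1`, and `B` commutes with shifts. -/
lemma charDFT_apply_of_commute_shiftOp {B : (ZMod n → F) →ₗ[F] (ZMod n → F)}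
    (hB : Commute B (shiftOp F n)) (x : ZMod n → F) (j : ZMod n) :
    charDFT ψ (B x) j = charDFT ψ (B (Pi.single 0 1)) j * charDFT ψ x j := by
  have hsingle (m : ZMod n) :
      charDFT ψ (B (Pi.single m 1)) j = ψ (j * m) * charDFT ψ (B (Pi.single 0 1)) j := by
    rw [single_eq_shiftOp_pow_single, ← Module.End.mul_apply, (hB.pow_right _).eq,
      Module.End.mul_apply, charDFT_shiftOp_pow, ZMod.natCast_zmod_val, mul_neg, neg_neg]
  calc charDFT ψ (B x) j
      = ∑ m, algebraMap F E (x m) * charDFT ψ (B (Pi.single m 1)) j := by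
        conv_lhs => rw [pi_eq_sum_univ' x]
        rw [map_sum, map_sum, Finset.sum_apply]
        refine sum_congr rfl fun m _ => ?_
        rw [map_smul, map_smul, Pi.smul_apply, Algebra.smul_def]
    _ = charDFT ψ (B (Pi.single 0 1)) j * charDFT ψ x j := by
        rw [charDFT_apply ψ x, mul_sum]
        exact sum_congr rfl fun m _ => by rw [hsingle m]; ring

lemma charDFT_comp_shiftOp_sub_id {B : (ZMod n → F) →ₗ[F] (ZMod n → F)}
    (hB : Commute B (shiftOp F n)) (x : ZMod n → F) (j : ZMod n) :
    charDFT ψ ((B ∘ₗ (shiftOp F n - LinearMap.id)) x) j =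
      charDFT ψ (B (Pi.single 0 1)) j * (ψ (-j) - 1) * charDFT ψ x j := by
  rw [LinearMap.comp_apply, charDFT_apply_of_commute_shiftOp ψ hB, LinearMap.sub_apply, map_sub,
    Pi.sub_apply, LinearMap.id_apply, charDFT_shiftOp]
  ring

lemma charDFT_injective (hψ : ψ.IsPrimitive) (hn : (n : E) ≠ 0) :
    Injective (charDFT (F := F) ψ) := by
  refine (injective_iff_map_eq_zero _).2 fun x hx => funext fun b => ?_
  have inversion : ∑ j, charDFT ψ x j * ψ (-(j * b)) = n * algebraMap F E (x b) := by
    calc ∑ j, charDFT ψ x j * ψ (-(j * b))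
        = ∑ a, algebraMap F E (x a) * ∑ j, ψ (j * (a - b)) := by
          simp_rw [charDFT_apply, sum_mul, mul_sum]
          rw [sum_comm]
          refine sum_congr rfl fun a _ => sum_congr rfl fun j _ => ?_
          rw [mul_assoc, ← AddChar.map_add_eq_mul]
          ring_nf
      _ = n * algebraMap F E (x b) := by
          simp [AddChar.sum_mulShift _ hψ, sub_eq_zero, mul_comm]
  simp only [hx, Pi.zero_apply, zero_mul, sum_const_zero] at inversion
  exact (algebraMap F E).injective (by simpa [hn] using inversion.symm)

end Fourier

section MultiplicativeFunction

variable {n : ℕ} [Fact n.Prime] {F : Type*} [Field F] {f : ZMod n → F}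

lemma IsMultFun.map_one (hf : IsMultFun f) : f 1 = 1 := by
  obtain ⟨-, ⟨a, ha, hfa⟩, hmul⟩ := hf
  have h1 : f 1 ≠ 0 := fun h => hfa (by rw [← mul_one a, hmul a 1 ha one_ne_zero, h, mul_zero])
  exact mul_left_cancel₀ h1 (by rw [mul_one, ← hmul 1 1 one_ne_zero one_ne_zero, one_mul])

def IsMultFun.toMulChar (hf : IsMultFun f) : MulChar (ZMod n) F where
  toFun := f
  map_one' := hf.map_one
  map_mul' a b := by
    obtain ⟨hf0, -, hmul⟩ := hf
    rcases eq_or_ne a 0 with rfl | ha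
    · simp [hf0]
    rcases eq_or_ne b 0 with rfl | hb
    · simp [hf0]
    exact hmul a b ha hb
  map_nonunit' a ha := by
    rw [isUnit_iff_ne_zero, not_not] at ha
    rw [ha, hf.1]

lemma IsMultFun.toMulChar_apply (hf : IsMultFun f) (a : ZMod n) : hf.toMulChar a = f a := rfl

lemma IsMultFun.toMulChar_ne_one (hf : IsMultFun f) (hnt : ∃ a : ZMod n, a ≠ 0 ∧ f a ≠ 1) :
    hf.toMulChar ≠ 1 := by
  obtain ⟨a, ha, hfa⟩ := hnt
  intro h
  exact hfa (by rw [← hf.toMulChar_apply, h, MulChar.one_apply (isUnit_iff_ne_zero.2 ha)])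

/-- For `j ≠ 0`, `charDFT ψ f j` is a Gauss sum of the nontrivial character `f`. -/
lemma charDFT_ne_zero_of_isMultFun {E : Type*} [Field E] [Algebra F E]
    {ψ : AddChar (ZMod n) E} (hψ : ψ.IsPrimitive) (hn : (n : E) ≠ 0) (hf : IsMultFun f)
    (hnt : ∃ a : ZMod n, a ≠ 0 ∧ f a ≠ 1) {j : ZMod n} (hj : j ≠ 0) : charDFT ψ f j ≠ 0 := by
  have hgauss : charDFT ψ f j = gaussSum (hf.toMulChar.ringHomComp (algebraMap F E))
      (ψ.mulShift j) := rfl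
  rw [hgauss]
  refine gaussSum_ne_zero_of_nontrivial (by rwa [ZMod.card])
    ((MulChar.ringHomComp_ne_one_iff (algebraMap F E).injective).2 (hf.toMulChar_ne_one hnt))
    fun a ha => ?_
  rw [AddChar.mulShift_mulShift]
  exact hψ (mul_ne_zero hj ha)

end MultiplicativeFunction

theorem stmt10_general (p n : ℕ) (hp : p.Prime)
    [Fact n.Prime] (hnp : n ≠ p)
    (F : Type) [Field F] [Fintype F] [CharP F p]
    (f : ZMod n → F) (hf : IsMultFun f)
    (hnt : ∃ a : ZMod n, a ≠ 0 ∧ f a ≠ 1) :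
    ∀ B : (ZMod n → F) →ₗ[F] (ZMod n → F),
      B ∘ₗ shiftOp F n = shiftOp F n ∘ₗ B →
      MostComplicated (fun y : ZMod n → F => (B ∘ₗ (shiftOp F n - LinearMap.id)) y) f ∨
      AlmostMostComplicated (fun y : ZMod n → F => (B ∘ₗ (shiftOp F n - LinearMap.id)) y) f := by
  intro B hB
  have hn : n.Prime := Fact.out
  have : NeZero n := ⟨hn.ne_zero⟩
  have hnF : (n : F) ≠ 0 := by
    rw [Ne, CharP.cast_eq_zero_iff F p]
    exact fun h => hnp ((Nat.prime_dvd_prime_iff_eq hp hn).1 h).symm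
  obtain ⟨E, _, _, ψ, hψ⟩ : ∃ (E : Type) (_ : Field E) (_ : Algebra F E)
      (ψ : AddChar (ZMod n) E), ψ.IsPrimitive :=
    let ψ := AddChar.primitiveZModChar ⟨n, hn.pos⟩ F hnF
    ⟨CyclotomicField ψ.n F, inferInstance, inferInstance, ψ.char, ψ.prim⟩
  have hnE : (n : E) ≠ 0 := by simpa using (algebraMap F E).injective.ne hnF
  set μ : ZMod n → E := fun j => charDFT (F := F) ψ (B (Pi.single 0 1)) j * (ψ (-j) - 1)
  have hμ0 : μ 0 = 0 := by simp [μ]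
  refine mostComplicated_or_almostMostComplicated_of_diagonal (Φ := charDFT ψ) (μ := μ)
    (charDFT_injective ψ hψ hnE)
    (charDFT_comp_shiftOp_sub_id ψ hB) (fun j hj => ?_) hμ0
    (charDFT_single_zero (F := F) ψ 0 ▸ one_ne_zero)
  exact charDFT_ne_zero_of_isMultFun hψ hnE hf hnt
    (by rintro rfl; exact hj hμ0)

/-- Theorem 2: a nontrivial multiplicative function `f : ZMod n → F_q`
(`n` an odd prime, `n ≠ p = char F_q`) is a most complicated or almost most complicated
point for every operator of the form `A = B·Δ` with `B` translation-invariant. -/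
theorem stmt10 (p d q n : ℕ) (hp : p.Prime) (hq : q = p ^ d)
    [Fact n.Prime] (hodd : Odd n) (hnp : n ≠ p)
    (F : Type) [Field F] [Fintype F] [CharP F p] (hF : Fintype.card F = q)
    (f : ZMod n → F) (hf : IsMultFun f)
    (hnt : ∃ a : ZMod n, a ≠ 0 ∧ f a ≠ 1) :
    ∀ B : (ZMod n → F) →ₗ[F] (ZMod n → F),
      B ∘ₗ shiftOp F n = shiftOp F n ∘ₗ B →
      MostComplicated (fun y : ZMod n → F => (B ∘ₗ (shiftOp F n - LinearMap.id)) y) f ∨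
      AlmostMostComplicated (fun y : ZMod n → F => (B ∘ₗ (shiftOp F n - LinearMap.id)) y) f :=
  stmt10_general p n hp hnp F f hf hnt
end

section
/- Let q = p^d be a prime power, let n be an odd prime with n ≠ p, and let f : ZMod n → F_q be a nontrivial multiplicative function, viewed as a vector in F_q^n. Then f is an almost most complicated point, and is not a most complicated point, for the finite difference operator Δ = δ − I on F_q^n. -/
/-!
Every image of `Δ` has coordinate sum zero, and on the zero-sum hyperplane `W` the operator `Δ`
is diagonalised by the discrete Fourier transform with a primitive additive character `ψ` of
`ZMod n` (values in a field containing a primitive `n`-th root of unity, which exists as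
`n ≠ p`): the `j`-th coefficient gets multiplied by `ψ (-j) - 1`, nonzero for `j ≠ 0`.
A nontrivial multiplicative function `f` lies in `W`, and its `j`-th coefficient is `f j`⁻¹
times the first one, so all its coefficients at nonzero frequencies are nonzero (else `f = 0`).
Hence the eventual period `t` of `f` forces `(ψ (-j) - 1) ^ t = 1` for all `j ≠ 0`, i.e. `Δ^t`
fixes `W` pointwise. So every point has preperiod at most `1` and period at most `t`, `f` itself
is periodic, and the delta function at `0`, having sum `1`, is not periodic.
-/

open Function Polynomial Finset

section Dynamics

variable {S : Type*} (T : S → S) (x : S)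

theorem exists_iterate_add_eq [Finite S] : ∃ s t, 1 ≤ t ∧ T^[s + t] x = T^[s] x := by
  obtain ⟨a, b, hab, he⟩ := Finite.exists_ne_map_eq_of_infinite (fun k : ℕ => T^[k] x)
  rcases hab.lt_or_gt with h | h
  · exact ⟨a, b - a, by omega, by rw [Nat.add_sub_cancel' h.le]; exact he.symm⟩
  · exact ⟨b, a - b, by omega, by rw [Nat.add_sub_cancel' h.le]; exact he⟩

theorem orbitPeriod_spec [Finite S] :
    1 ≤ orbitPeriod T x ∧ ∃ s, T^[s + orbitPeriod T x] x = T^[s] x := by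
  obtain ⟨s, t, ht, h⟩ := exists_iterate_add_eq T x
  exact Nat.sInf_mem (s := {t | 1 ≤ t ∧ ∃ s, T^[s + t] x = T^[s] x}) ⟨t, ht, s, h⟩

theorem orbitPreperiod_spec [Finite S] :
    ∃ t, 1 ≤ t ∧ T^[orbitPreperiod T x + t] x = T^[orbitPreperiod T x] x := by
  obtain ⟨s, t, ht, h⟩ := exists_iterate_add_eq T x
  exact Nat.sInf_mem (s := {s | ∃ t, 1 ≤ t ∧ T^[s + t] x = T^[s] x}) ⟨s, t, ht, h⟩

variable {T x}

theorem orbitPeriod_le {s t : ℕ} (ht : 1 ≤ t) (h : T^[s + t] x = T^[s] x) :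
    orbitPeriod T x ≤ t :=
  Nat.sInf_le ⟨ht, s, h⟩

theorem orbitPreperiod_le {s t : ℕ} (ht : 1 ≤ t) (h : T^[s + t] x = T^[s] x) :
    orbitPreperiod T x ≤ s :=
  Nat.sInf_le ⟨t, ht, h⟩

end Dynamics

namespace AddChar

variable {R F E : Type*} [CommRing R] [Fintype R] [Field F] [Field E] [Algebra F E]
  (ψ : AddChar R E)

def dft : (R → F) →ₗ[F] (R → E) where
  toFun x j := ∑ a, algebraMap F E (x a) * ψ (a * j)
  map_add' x y := by ext j; simp [add_mul, Finset.sum_add_distrib]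
  map_smul' c x := by ext j; simp [Algebra.smul_def, Finset.mul_sum, mul_assoc]

theorem dft_apply (x : R → F) (j : R) : ψ.dft x j = ∑ a, algebraMap F E (x a) * ψ (a * j) :=
  rfl

theorem dft_apply_zero (x : R → F) : ψ.dft x 0 = algebraMap F E (∑ a, x a) := by
  simp [dft_apply]

theorem dft_comp_addRight (x : R → F) (c j : R) :
    ψ.dft (fun a => x (a + c)) j = ψ (-(c * j)) * ψ.dft x j := by
  rw [dft_apply, dft_apply, Finset.mul_sum]
  refine Fintype.sum_equiv (Equiv.addRight c) _ _ fun a => ?_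
  rw [Equiv.coe_addRight, ← mul_assoc, mul_comm (ψ _), mul_assoc, ← map_add_eq_mul]
  ring_nf

theorem sum_mul_dft {ψ : AddChar R E} (hψ : ψ.IsPrimitive) (x : R → F) (a : R) :
    ∑ j, ψ (-(a * j)) * ψ.dft x j = Fintype.card R * algebraMap F E (x a) := by
  classical
  have hchar_sum (b : R) : ∑ j, ψ (j * (b - a)) = if b = a then (Fintype.card R : E) else 0 := by
    rw [sum_mulShift _ hψ, sub_eq_zero]; push_cast; rfl
  simp_rw [dft_apply, Finset.mul_sum]
  rw [Finset.sum_comm]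
  calc ∑ b, ∑ j, ψ (-(a * j)) * (algebraMap F E (x b) * ψ (b * j))
      = ∑ b, algebraMap F E (x b) * ∑ j, ψ (j * (b - a)) := by
        refine Finset.sum_congr rfl fun b _ => ?_
        rw [Finset.mul_sum]
        refine Finset.sum_congr rfl fun j _ => ?_
        rw [show j * (b - a) = -(a * j) + b * j by ring, map_add_eq_mul]
        ring
    _ = Fintype.card R * algebraMap F E (x a) := by
        simp_rw [hchar_sum, mul_ite, mul_zero, Finset.sum_ite_eq', Finset.mem_univ, if_true]
        ring

theorem dft_injective {ψ : AddChar R E} (hψ : ψ.IsPrimitive) (hR : (Fintype.card R : F) ≠ 0) :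
    Function.Injective (ψ.dft (F := F)) := by
  refine (injective_iff_map_eq_zero _).2 fun x hx => funext fun a => ?_
  have h := sum_mul_dft hψ x a
  simp only [hx, Pi.zero_apply, mul_zero, Finset.sum_const_zero] at h
  have hR' : (Fintype.card R : E) ≠ 0 := by
    rwa [← map_natCast (algebraMap F E), _root_.map_ne_zero]
  exact (algebraMap F E).injective (by simpa [hR'] using h.symm)

end AddChar

abbrev diffOp (F : Type*) [Field F] (n : ℕ) : (ZMod n → F) →ₗ[F] (ZMod n → F) :=
  shiftOp F n - LinearMap.id

section FiniteDifference

variable {n : ℕ} {F E : Type*} [Field F] [Field E] [Algebra F E]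

theorem diffOp_apply (x : ZMod n → F) (i : ZMod n) : diffOp F n x i = x (i + 1) - x i :=
  rfl

variable [NeZero n]

theorem sum_diffOp (x : ZMod n → F) : ∑ i, diffOp F n x i = 0 := by
  simp only [diffOp_apply, Finset.sum_sub_distrib]
  rw [Fintype.sum_equiv (Equiv.addRight 1) (fun i => x (i + 1)) x fun _ => rfl, sub_self]

theorem sum_iterate_diffOp {t : ℕ} (ht : 1 ≤ t) (x : ZMod n → F) :
    ∑ i, (diffOp F n)^[t] x i = 0 := by
  obtain ⟨k, rfl⟩ := Nat.exists_eq_add_of_le' ht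
  rw [iterate_succ_apply']
  exact sum_diffOp _

theorem one_le_orbitPreperiod_diffOp [Finite F] {y : ZMod n → F} (hy : ∑ i, y i ≠ 0) :
    1 ≤ orbitPreperiod (diffOp F n) y := by
  obtain ⟨t, ht, h⟩ := orbitPreperiod_spec (diffOp F n) y
  refine Nat.one_le_iff_ne_zero.2 fun h0 => hy ?_
  rw [h0, zero_add, iterate_zero_apply] at h
  rw [← h]
  exact sum_iterate_diffOp ht y

theorem dft_diffOp (ψ : AddChar (ZMod n) E) (x : ZMod n → F) (j : ZMod n) :
    ψ.dft (diffOp F n x) j = (ψ (-j) - 1) * ψ.dft x j := by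
  have hx : diffOp F n x = (fun i => x (i + 1)) - x := rfl
  rw [hx, map_sub, Pi.sub_apply, ψ.dft_comp_addRight, one_mul, sub_mul, one_mul]

theorem dft_iterate_diffOp (ψ : AddChar (ZMod n) E) (k : ℕ) (x : ZMod n → F) (j : ZMod n) :
    ψ.dft ((diffOp F n)^[k] x) j = (ψ (-j) - 1) ^ k * ψ.dft x j := by
  induction k with
  | zero => rw [iterate_zero_apply, pow_zero, one_mul]
  | succ k ih => rw [iterate_succ_apply', dft_diffOp, ih, pow_succ', mul_assoc]

theorem iterate_diffOp_eq_iff {ψ : AddChar (ZMod n) E} (hψ : ψ.IsPrimitive) (hn : (n : F) ≠ 0)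
    {x : ZMod n → F} {a b : ℕ} :
    (diffOp F n)^[a] x = (diffOp F n)^[b] x ↔
      ∀ j, (ψ (-j) - 1) ^ a * ψ.dft x j = (ψ (-j) - 1) ^ b * ψ.dft x j := by
  rw [← (ψ.dft_injective hψ (by rwa [ZMod.card])).eq_iff, funext_iff]
  simp only [dft_iterate_diffOp]

theorem AddChar.IsPrimitive.apply_neg_sub_one_ne_zero {ψ : AddChar (ZMod n) E}
    (hψ : ψ.IsPrimitive) {j : ZMod n} (hj : j ≠ 0) : ψ (-j) - 1 ≠ 0 := by
  rwa [sub_ne_zero, Ne, hψ.zmod_char_eq_one_iff, neg_eq_zero]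

end FiniteDifference

namespace IsMultFun

variable {n : ℕ} [Fact n.Prime] {F E : Type*} [Field F] [Field E] [Algebra F E]
  {f : ZMod n → F}

theorem apply_mul (hf : IsMultFun f) {a : ZMod n} (ha : a ≠ 0) (b : ZMod n) :
    f (a * b) = f a * f b := by
  rcases eq_or_ne b 0 with rfl | hb
  · rw [mul_zero, hf.1, mul_zero]
  · exact hf.2.2 a b ha hb

theorem apply_ne_zero (hf : IsMultFun f) {a : ZMod n} (ha : a ≠ 0) : f a ≠ 0 := by
  obtain ⟨b, -, hb⟩ := hf.2.1
  intro h
  apply hb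
  rw [← mul_inv_cancel_left₀ ha b, hf.apply_mul ha, h, zero_mul]

theorem sum_eq_zero (hf : IsMultFun f) (hnt : ∃ a : ZMod n, a ≠ 0 ∧ f a ≠ 1) :
    ∑ a, f a = 0 := by
  obtain ⟨c, hc, hfc⟩ := hnt
  refine eq_zero_of_mul_eq_self_left hfc ?_
  rw [Finset.mul_sum]
  exact Fintype.sum_equiv (Equiv.mulLeft₀ c hc) _ _ fun a => (hf.apply_mul hc a).symm

theorem dft_one_eq (hf : IsMultFun f) (ψ : AddChar (ZMod n) E) {j : ZMod n} (hj : j ≠ 0) :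
    ψ.dft f 1 = algebraMap F E (f j) * ψ.dft f j := by
  rw [AddChar.dft_apply, AddChar.dft_apply, Finset.mul_sum]
  refine (Fintype.sum_equiv (Equiv.mulLeft₀ j hj) _ _ fun a => ?_).symm
  change _ = algebraMap F E (f (j * a)) * ψ (j * a * 1)
  rw [hf.apply_mul hj, RingHom.map_mul, mul_one, mul_comm j a, mul_assoc]

theorem dft_ne_zero (hf : IsMultFun f) {ψ : AddChar (ZMod n) E} (hψ : ψ.IsPrimitive)
    (hn : (n : F) ≠ 0) (hsum : ∑ a, f a = 0) {j : ZMod n} (hj : j ≠ 0) : ψ.dft f j ≠ 0 := by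
  intro h0
  have h1 : ψ.dft f 1 = 0 := by rw [hf.dft_one_eq ψ hj, h0, mul_zero]
  have hdft : ψ.dft f = 0 := by
    funext k
    rcases eq_or_ne k 0 with rfl | hk
    · rw [AddChar.dft_apply_zero, hsum, map_zero, Pi.zero_apply]
    · have hk' := hf.dft_one_eq ψ hk
      rw [h1] at hk'
      exact (mul_eq_zero.1 hk'.symm).resolve_left ((_root_.map_ne_zero _).2 (hf.apply_ne_zero hk))
  obtain ⟨a, -, hfa⟩ := hf.2.1
  exact hfa (congrFun (ψ.dft_injective hψ (by rwa [ZMod.card]) (hdft.trans (map_zero _).symm)) a)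

theorem pow_eq_one_of_iterate_diffOp_eq (hf : IsMultFun f) {ψ : AddChar (ZMod n) E}
    (hψ : ψ.IsPrimitive) (hn : (n : F) ≠ 0) (hsum : ∑ a, f a = 0) {s t : ℕ}
    (h : (diffOp F n)^[s + t] f = (diffOp F n)^[s] f) {j : ZMod n} (hj : j ≠ 0) :
    (ψ (-j) - 1) ^ t = 1 := by
  have hj' := (iterate_diffOp_eq_iff hψ hn).1 h j
  have hne : (ψ (-j) - 1) ^ s * ψ.dft f j ≠ 0 :=
    mul_ne_zero (pow_ne_zero _ (hψ.apply_neg_sub_one_ne_zero hj)) (hf.dft_ne_zero hψ hn hsum hj)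
  exact mul_right_cancel₀ hne (by linear_combination hj')

end IsMultFun

theorem IsMultFun.iterate_diffOp_of_iterate_eq {n : ℕ} [Fact n.Prime] {F : Type*} [Field F]
    {f : ZMod n → F} (hf : IsMultFun f) (hn : (n : F) ≠ 0) (hsum : ∑ a, f a = 0) {s t : ℕ}
    (h : (diffOp F n)^[s + t] f = (diffOp F n)^[s] f) :
    (diffOp F n)^[t] f = f ∧ ∀ y, (diffOp F n)^[1 + t] y = (diffOp F n)^[1] y := by
  have : NeZero (n : F) := ⟨hn⟩
  obtain ⟨ζ, hζ⟩ := HasEnoughRootsOfUnity.exists_primitiveRoot (AlgebraicClosure F) n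
  have hψ := AddChar.zmodChar_primitive_of_primitive_root n hζ
  have hroot := fun j (hj : j ≠ 0) => hf.pow_eq_one_of_iterate_diffOp_eq hψ hn hsum h hj
  refine ⟨(iterate_diffOp_eq_iff hψ hn (b := 0)).2 fun j => ?_, fun y =>
    (iterate_diffOp_eq_iff hψ hn).2 fun j => ?_⟩
  · rcases eq_or_ne j 0 with rfl | hj
    · rw [AddChar.dft_apply_zero, hsum, map_zero, mul_zero, mul_zero]
    · rw [hroot j hj, pow_zero]
  · rcases eq_or_ne j 0 with rfl | hj
    · simp
    · rw [pow_add, hroot j hj, mul_one]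

theorem stmt12_general (p n : ℕ) (hp : p.Prime)
    [Fact n.Prime] (hnp : n ≠ p)
    (F : Type) [Field F] [Fintype F] [CharP F p]
    (f : ZMod n → F) (hf : IsMultFun f)
    (hnt : ∃ a : ZMod n, a ≠ 0 ∧ f a ≠ 1) :
    AlmostMostComplicated (fun y : ZMod n → F => (shiftOp F n - LinearMap.id : (ZMod n → F) →ₗ[F] (ZMod n → F)) y) f ∧
    ¬ MostComplicated (fun y : ZMod n → F => (shiftOp F n - LinearMap.id : (ZMod n → F) →ₗ[F] (ZMod n → F)) y) f := by
  change AlmostMostComplicated (diffOp F n) f ∧ ¬ MostComplicated (diffOp F n) f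
  have hn : (n : F) ≠ 0 := by
    rw [Ne, CharP.cast_eq_zero_iff F p, Nat.prime_dvd_prime_iff_eq hp Fact.out]
    exact hnp.symm
  obtain ⟨ht, s, hs⟩ := orbitPeriod_spec (diffOp F n) f
  obtain ⟨hfix, hall⟩ := hf.iterate_diffOp_of_iterate_eq hn (hf.sum_eq_zero hnt) hs
  have hperiod : univ.sup (orbitPeriod (diffOp F n)) = orbitPeriod (diffOp F n) f :=
    le_antisymm (Finset.sup_le fun y _ => orbitPeriod_le ht (hall y)) (Finset.le_sup (mem_univ f))
  have hpre_f : orbitPreperiod (diffOp F n) f = 0 :=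
    Nat.le_zero.1 (orbitPreperiod_le ht (by rwa [zero_add]))
  have hpre : univ.sup (orbitPreperiod (diffOp F n)) = 1 := by
    refine le_antisymm (Finset.sup_le fun y _ => orbitPreperiod_le ht (hall y)) ?_
    refine Finset.le_sup_of_le (mem_univ (Pi.single 0 1)) (one_le_orbitPreperiod_diffOp ?_)
    simp
  exact ⟨⟨hperiod.symm, by rw [hpre_f, hpre]⟩,
    fun h => zero_ne_one (hpre_f.symm.trans (h.2.trans hpre))⟩

/-- a nontrivial multiplicative function `f : ZMod n → F_q` (`n` an odd
prime, `n ≠ p = char F_q`) is almost most complicated, and not most complicated, for the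
finite difference operator `Δ = δ - I`. -/
theorem stmt12 (p d q n : ℕ) (hp : p.Prime) (hq : q = p ^ d)
    [Fact n.Prime] (hodd : Odd n) (hnp : n ≠ p)
    (F : Type) [Field F] [Fintype F] [CharP F p] (hF : Fintype.card F = q)
    (f : ZMod n → F) (hf : IsMultFun f)
    (hnt : ∃ a : ZMod n, a ≠ 0 ∧ f a ≠ 1) :
    AlmostMostComplicated (fun y : ZMod n → F => (shiftOp F n - LinearMap.id : (ZMod n → F) →ₗ[F] (ZMod n → F)) y) f ∧
    ¬ MostComplicated (fun y : ZMod n → F => (shiftOp F n - LinearMap.id : (ZMod n → F) →ₗ[F] (ZMod n → F)) y) f :=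
  stmt12_general p n hp hnp F f hf hnt
end
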